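/- arXiv:2112.10234 — 12 statements merged into one kernel-verified Lean document; each statement's English description precedes it below -/
import Mathlib

section
/- Let Ω be a measurable space, 𝒫 a nonempty family of probability measures on Ω, 𝕐 a measurable space, Y : Ω → 𝕐 measurable, A ⊆ 𝕐 a measurable set, and W : Ω → ℝ a measurable function taking values in [0,1] (the data-dependent upper prediction probability ω ↦ Π̄_{D(ω)}(A) of the assertion A). Suppose one-sided contraction holds: there exists γ̄ ∈ ℝ with W(ω) ≤ γ̄ for all ω ∈ Ω and γ̄ < sup_{P∈𝒫} P{ω : Y(ω) ∈ A}. Then validity fails at A: there exists α ∈ [0,1] such that sup_{P∈𝒫} P({ω : W(ω) ≤ α} ∩ {ω : Y(ω) ∈ A}) > α. -/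
open MeasureTheory

/-- If the data-dependent upper prediction probability `W` of an assertion `A`
is uniformly bounded by some `γ̄` strictly below `sup_{P ∈ 𝒫} P{Y ∈ A}` (one-sided
contraction), then validity fails at `A`. -/
theorem stmt_1 {Ω 𝕐 : Type*} [MeasurableSpace Ω] [MeasurableSpace 𝕐]
    (𝓟 : Set (Measure Ω)) (h𝓟 : 𝓟.Nonempty) (hprob : ∀ P ∈ 𝓟, IsProbabilityMeasure P)
    (Y : Ω → 𝕐) (hY : Measurable Y) (A : Set 𝕐) (hA : MeasurableSet A)
    (W : Ω → ℝ) (hW : Measurable W) (hW01 : ∀ ω, W ω ∈ Set.Icc (0 : ℝ) 1)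
    (γ : ℝ) (hγbd : ∀ ω, W ω ≤ γ)
    (hcontr : ENNReal.ofReal γ < ⨆ P ∈ 𝓟, P {ω | Y ω ∈ A}) :
    ∃ α ∈ Set.Icc (0 : ℝ) 1,
      ENNReal.ofReal α < ⨆ P ∈ 𝓟, P ({ω | W ω ≤ α} ∩ {ω | Y ω ∈ A}) := by
  set α : ℝ := max γ 0 with hα
  have hsup_le : (⨆ P ∈ 𝓟, P {ω | Y ω ∈ A}) ≤ 1 := by
    refine iSup₂_le fun P hP => ?_
    have := hprob P hP
    exact prob_le_one
  have hγ1 : ENNReal.ofReal γ < 1 := lt_of_lt_of_le hcontr hsup_le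
  have hγlt1 : γ < 1 := by
    by_contra h
    push_neg at h
    have : (1 : ENNReal) ≤ ENNReal.ofReal γ := by
      simpa using ENNReal.ofReal_le_ofReal h
    exact absurd hγ1 (not_lt.mpr this)
  refine ⟨α, ⟨le_max_right _ _, max_le hγlt1.le zero_le_one⟩, ?_⟩
  have hset : {ω | W ω ≤ α} = Set.univ := by
    ext ω; simp only [Set.mem_setOf_eq, Set.mem_univ, iff_true]
    exact le_trans (hγbd ω) (le_max_left _ _)
  have hofReal : ENNReal.ofReal α = ENNReal.ofReal γ := by
    rcases le_or_gt 0 γ with h | h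
    · simp [hα, max_eq_left h]
    · simp [hα, max_eq_right h.le, ENNReal.ofReal_of_nonpos h.le]
  rw [hofReal, hset]
  simpa using hcontr
end

section
/- Let Ω be a measurable space, 𝒫 a nonempty family of probability measures on Ω, 𝕐 a measurable space, Y : Ω → 𝕐 measurable, A ⊆ 𝕐 a measurable set, and V : Ω → ℝ a measurable function taking values in [0,1] (the data-dependent lower prediction probability ω ↦ Π_{D(ω)}(A) of the assertion A). Suppose one-sided contraction holds: there exists γ ∈ ℝ with V(ω) ≥ γ for all ω ∈ Ω and γ > inf_{P∈𝒫} P{ω : Y(ω) ∈ A}. Then validity fails at A: there exists α ∈ [0,1] such that sup_{P∈𝒫} P({ω : V(ω) ≥ 1 − α} ∩ {ω : Y(ω) ∉ A}) > α. -/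
open MeasureTheory

/- The contraction bound `V ≥ γ` makes the event `{V ≥ 1 - α}` certain for `α = 1 - γ`, so the
validity inequality at this level asks `P {Y ∉ A} ≤ 1 - γ`, i.e. `P {Y ∈ A} ≥ γ`, for every
`P ∈ 𝓟`; the measure witnessing `inf_P P {Y ∈ A} < γ` violates it. -/

theorem ofReal_one_sub_lt_measure_compl {Ω : Type*} [MeasurableSpace Ω] (μ : Measure Ω)
    [IsProbabilityMeasure μ] {s : Set Ω} {γ : ℝ} (hγ : γ ≤ 1) (hs : μ s < ENNReal.ofReal γ) :
    ENNReal.ofReal (1 - γ) < μ sᶜ := by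
  have hγ_pos : 0 < γ := ENNReal.ofReal_pos.mp (pos_of_gt hs)
  have h_one_lt : 1 < μ sᶜ + ENNReal.ofReal γ :=
    calc (1 : ENNReal) = μ Set.univ := measure_univ.symm
      _ ≤ μ s + μ sᶜ := measure_univ_le_add_compl s
      _ < ENNReal.ofReal γ + μ sᶜ := ENNReal.add_lt_add_right (measure_ne_top μ _) hs
      _ = μ sᶜ + ENNReal.ofReal γ := add_comm _ _
  rw [ENNReal.ofReal_sub _ hγ_pos.le, ENNReal.ofReal_one]
  exact ENNReal.sub_lt_of_lt_add (ENNReal.ofReal_le_one.mpr hγ) h_one_lt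

theorem stmt_2_general {Ω 𝕐 : Type*} [MeasurableSpace Ω] [MeasurableSpace 𝕐]
    (𝓟 : Set (Measure Ω)) (hprob : ∀ P ∈ 𝓟, IsProbabilityMeasure P)
    (Y : Ω → 𝕐) (A : Set 𝕐)
    (V : Ω → ℝ) (hV01 : ∀ ω, V ω ∈ Set.Icc (0 : ℝ) 1)
    (γ : ℝ) (hγbd : ∀ ω, γ ≤ V ω)
    (hcontr : ⨅ P ∈ 𝓟, P {ω | Y ω ∈ A} < ENNReal.ofReal γ) :
    ∃ α ∈ Set.Icc (0 : ℝ) 1,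
      ENNReal.ofReal α < ⨆ P ∈ 𝓟, P ({ω | 1 - α ≤ V ω} ∩ {ω | Y ω ∉ A}) := by
  obtain ⟨P, hP, hP_lt⟩ : ∃ P ∈ 𝓟, P {ω | Y ω ∈ A} < ENNReal.ofReal γ := by
    simpa only [iInf_lt_iff, exists_prop] using hcontr
  have := hprob P hP
  obtain ⟨ω₀⟩ := nonempty_of_isProbabilityMeasure P
  have hγ_le_one : γ ≤ 1 := (hγbd ω₀).trans (hV01 ω₀).2
  have hγ_pos : 0 < γ := ENNReal.ofReal_pos.mp (pos_of_gt hP_lt)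
  have h_event : {ω | Y ω ∈ A}ᶜ ⊆ {ω | 1 - (1 - γ) ≤ V ω} ∩ {ω | Y ω ∉ A} :=
    fun ω hω => ⟨show 1 - (1 - γ) ≤ V ω by rw [sub_sub_cancel]; exact hγbd ω, hω⟩
  refine ⟨1 - γ, ⟨by linarith, by linarith⟩, ?_⟩
  calc ENNReal.ofReal (1 - γ) < P {ω | Y ω ∈ A}ᶜ :=
        ofReal_one_sub_lt_measure_compl P hγ_le_one hP_lt
    _ ≤ P ({ω | 1 - (1 - γ) ≤ V ω} ∩ {ω | Y ω ∉ A}) := measure_mono h_event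
    _ ≤ ⨆ P ∈ 𝓟, P ({ω | 1 - (1 - γ) ≤ V ω} ∩ {ω | Y ω ∉ A}) :=
        le_biSup (fun P : Measure Ω => P ({ω | 1 - (1 - γ) ≤ V ω} ∩ {ω | Y ω ∉ A})) hP

/-- If the data-dependent lower prediction probability `V` of an assertion `A`
is uniformly bounded below by some `γ` strictly above `inf_{P ∈ 𝒫} P{Y ∈ A}` (one-sided
contraction), then validity fails at `A`. -/
theorem stmt_2 {Ω 𝕐 : Type*} [MeasurableSpace Ω] [MeasurableSpace 𝕐]
    (𝓟 : Set (Measure Ω)) (h𝓟 : 𝓟.Nonempty) (hprob : ∀ P ∈ 𝓟, IsProbabilityMeasure P)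
    (Y : Ω → 𝕐) (hY : Measurable Y) (A : Set 𝕐) (hA : MeasurableSet A)
    (V : Ω → ℝ) (hV : Measurable V) (hV01 : ∀ ω, V ω ∈ Set.Icc (0 : ℝ) 1)
    (γ : ℝ) (hγbd : ∀ ω, γ ≤ V ω)
    (hcontr : ⨅ P ∈ 𝓟, P {ω | Y ω ∈ A} < ENNReal.ofReal γ) :
    ∃ α ∈ Set.Icc (0 : ℝ) 1,
      ENNReal.ofReal α < ⨆ P ∈ 𝓟, P ({ω | 1 - α ≤ V ω} ∩ {ω | Y ω ∉ A}) :=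
  stmt_2_general 𝓟 hprob Y A V hV01 γ hγbd hcontr
end

section
/- Let 𝕌 be a measurable space and Q a probability measure on 𝕌 (the known distribution of the auxiliary variable). Let (Ω′, R) be a probability space and 𝒰 : Ω′ → Set 𝕌 a random set such that the graph {(u, ω′) : u ∈ 𝒰(ω′)} is measurable in 𝕌 × Ω′; define the random-set contour f(u) = R{ω′ : u ∈ 𝒰(ω′)}. Assume calibration: Q{u : f(u) ≤ α} ≤ α for all α ∈ [0,1] (in particular this holds when the pushforward of Q under f is the uniform distribution on {k/(n+1) : k = 1,…,n+1}). Let 𝒵 = 𝕏 × 𝕐, Ω a measurable space carrying measurable maps Z₁,…,Z_{n+1} : Ω → 𝒵 with Z_{n+1} = (X_{n+1}, Y_{n+1}), let 𝒫 be a family of probability measures on Ω, and let φ : 𝒵ⁿ × 𝒵 → 𝕌 be measurable such that for every P ∈ 𝒫 the law of U = φ(Z₁,…,Zₙ, Z_{n+1}) under P equals Q. Define the IM plausibility contour π(z₁,…,zₙ, x)(y) = f(φ(z₁,…,zₙ, (x,y))). Then the probabilistic predictor is uniformly valid: for every α ∈ [0,1] and every P ∈ 𝒫, P{ω : π(Z₁(ω),…,Zₙ(ω),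 X_{n+1}(ω))(Y_{n+1}(ω)) ≤ α} ≤ α. -/
/-! The plausibility at the observed data is `f U` with `U = φ(Zⁿ, Z_{n+1})`, whose law is `Q`
under every `P ∈ 𝓟`; so `P{f U ≤ α} = Q{f ≤ α} ≤ α` is just calibration of `f`, transported
along `U`. -/

open MeasureTheory
open scoped ENNReal

lemma measurable_measure_setOf_mem {𝕌 Ω' : Type*} [MeasurableSpace 𝕌] [MeasurableSpace Ω']
    (R : Measure Ω') [SFinite R] {𝒰 : Ω' → Set 𝕌}
    (hgraph : MeasurableSet {p : 𝕌 × Ω' | p.1 ∈ 𝒰 p.2}) :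
    Measurable fun u => R {ω' | u ∈ 𝒰 ω'} :=
  measurable_measure_prodMk_left hgraph

lemma measure_setOf_comp_le_of_map_eq {Ω 𝕌 : Type*} [MeasurableSpace Ω] [MeasurableSpace 𝕌]
    {P : Measure Ω} {Q : Measure 𝕌} {U : Ω → 𝕌} {f : 𝕌 → ℝ≥0∞} {α : ℝ≥0∞}
    (hU : AEMeasurable U P) (hf : Measurable f) (hlaw : P.map U = Q)
    (hcal : Q {u | f u ≤ α} ≤ α) :
    P {ω | f (U ω) ≤ α} ≤ α := by
  calc P {ω | f (U ω) ≤ α} = P.map U {u | f u ≤ α} :=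
        (Measure.map_apply_of_aemeasurable hU (hf measurableSet_Iic)).symm
    _ ≤ α := hlaw ▸ hcal

theorem stmt_5_general {𝕌 Ω' 𝕏 𝕐 Ω : Type*}
    [MeasurableSpace 𝕌] [MeasurableSpace Ω'] [MeasurableSpace 𝕏] [MeasurableSpace 𝕐]
    [MeasurableSpace Ω]
    (Q : Measure 𝕌)
    (R : Measure Ω') [IsProbabilityMeasure R]
    (𝒰 : Ω' → Set 𝕌)
    (hgraph : MeasurableSet {p : 𝕌 × Ω' | p.1 ∈ 𝒰 p.2})
    (hcal : ∀ α : ℝ≥0∞, α ≤ 1 → Q {u | R {ω' | u ∈ 𝒰 ω'} ≤ α} ≤ α)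
    (n : ℕ) (Z : Fin (n + 1) → Ω → 𝕏 × 𝕐) (hZ : ∀ i, Measurable (Z i))
    (𝓟 : Set (Measure Ω))
    (φ : (Fin n → 𝕏 × 𝕐) × (𝕏 × 𝕐) → 𝕌) (hφ : Measurable φ)
    (hlaw : ∀ P ∈ 𝓟,
      Measure.map (fun ω => φ (fun i => Z i.castSucc ω, Z (Fin.last n) ω)) P = Q) :
    ∀ α : ℝ≥0∞, α ≤ 1 → ∀ P ∈ 𝓟,
      P {ω | R {ω' | φ (fun i => Z i.castSucc ω,
        ((Z (Fin.last n) ω).1, (Z (Fin.last n) ω).2)) ∈ 𝒰 ω'} ≤ α} ≤ α := by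
  intro α hα P hP
  have hU : Measurable fun ω => φ (fun i => Z i.castSucc ω, Z (Fin.last n) ω) :=
    hφ.comp ((measurable_pi_lambda _ fun i : Fin n => hZ i.castSucc).prodMk (hZ (Fin.last n)))
  simpa only [Prod.mk.eta] using measure_setOf_comp_le_of_map_eq hU.aemeasurable
    (measurable_measure_setOf_mem R hgraph) (hlaw P hP) (hcal α hα)

/-- Theorem 1: the IM-based probabilistic predictor is uniformly valid.
Given a calibrated random set `𝒰` on the auxiliary space `𝕌` with contour
`f u = R {ω' | u ∈ 𝒰 ω'}` satisfying `Q{f ≤ α} ≤ α`, and an association `φ` whose value at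
the data has law `Q` under every `P ∈ 𝒫`, the plausibility contour
`π(zⁿ,x)(y) = f(φ(zⁿ,(x,y)))` evaluated at `(Zⁿ, X_{n+1}, Y_{n+1})` is stochastically no
smaller than uniform. -/
theorem stmt_5 {𝕌 Ω' 𝕏 𝕐 Ω : Type*}
    [MeasurableSpace 𝕌] [MeasurableSpace Ω'] [MeasurableSpace 𝕏] [MeasurableSpace 𝕐]
    [MeasurableSpace Ω]
    (Q : Measure 𝕌) [IsProbabilityMeasure Q]
    (R : Measure Ω') [IsProbabilityMeasure R]
    (𝒰 : Ω' → Set 𝕌)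
    (hgraph : MeasurableSet {p : 𝕌 × Ω' | p.1 ∈ 𝒰 p.2})
    (hcal : ∀ α : ℝ≥0∞, α ≤ 1 → Q {u | R {ω' | u ∈ 𝒰 ω'} ≤ α} ≤ α)
    (n : ℕ) (Z : Fin (n + 1) → Ω → 𝕏 × 𝕐) (hZ : ∀ i, Measurable (Z i))
    (𝓟 : Set (Measure Ω)) (hprob : ∀ P ∈ 𝓟, IsProbabilityMeasure P)
    (φ : (Fin n → 𝕏 × 𝕐) × (𝕏 × 𝕐) → 𝕌) (hφ : Measurable φ)
    (hlaw : ∀ P ∈ 𝓟,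
      Measure.map (fun ω => φ (fun i => Z i.castSucc ω, Z (Fin.last n) ω)) P = Q) :
    ∀ α : ℝ≥0∞, α ≤ 1 → ∀ P ∈ 𝓟,
      P {ω | R {ω' | φ (fun i => Z i.castSucc ω,
        ((Z (Fin.last n) ω).1, (Z (Fin.last n) ω).2)) ∈ 𝒰 ω'} ≤ α} ≤ α :=
  stmt_5_general Q R 𝒰 hgraph hcal n Z hZ 𝓟 φ hφ hlaw
end

section
/- Under the hypotheses of Theorem 1 — 𝕌 measurable, Q a probability measure on 𝕌; (Ω′,R) a probability space, 𝒰 : Ω′ → Set 𝕌 with measurable graph and contour f(u) = R{ω′ : u ∈ 𝒰(ω′)} satisfying Q{u : f(u) ≤ α} ≤ α for all α ∈ [0,1]; Ω carrying measurable Z₁,…,Z_{n+1} : Ω → 𝒵 = 𝕏 × 𝕐 with Z_{n+1} = (X_{n+1},Y_{n+1}); 𝒫 a family of probability measures on Ω; φ : 𝒵ⁿ × 𝒵 → 𝕌 measurable with law of φ(Z₁,…,Zₙ,Z_{n+1}) under each P ∈ 𝒫 equal to Q — define for data (zⁿ, x) the prediction set C_α(zⁿ, x) = {y ∈ 𝕐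 : f(φ(zⁿ,(x,y))) > α}. Then for every α ∈ [0,1], sup_{P∈𝒫} P{ω : Y_{n+1}(ω) ∉ C_α(Zⁿ(ω), X_{n+1}(ω))} ≤ α, i.e., the IM plausibility-contour prediction set achieves the nominal frequentist coverage probability. -/
open MeasureTheory
open scoped ENNReal

/-- Corollary to Theorem 1: under the IM construction's hypotheses, the
plausibility-contour prediction set `C_α(zⁿ,x) = {y | f(φ(zⁿ,(x,y))) > α}` achieves the
nominal frequentist coverage probability. -/
theorem stmt_6 {𝕌 Ω' 𝕏 𝕐 Ω : Type*}
    [MeasurableSpace 𝕌] [MeasurableSpace Ω'] [MeasurableSpace 𝕏] [MeasurableSpace 𝕐]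
    [MeasurableSpace Ω]
    (Q : Measure 𝕌) [IsProbabilityMeasure Q]
    (R : Measure Ω') [IsProbabilityMeasure R]
    (𝒰 : Ω' → Set 𝕌)
    (hgraph : MeasurableSet {p : 𝕌 × Ω' | p.1 ∈ 𝒰 p.2})
    (hcal : ∀ α : ℝ≥0∞, α ≤ 1 → Q {u | R {ω' | u ∈ 𝒰 ω'} ≤ α} ≤ α)
    (n : ℕ) (Z : Fin (n + 1) → Ω → 𝕏 × 𝕐) (hZ : ∀ i, Measurable (Z i))
    (𝓟 : Set (Measure Ω)) (hprob : ∀ P ∈ 𝓟, IsProbabilityMeasure P)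
    (φ : (Fin n → 𝕏 × 𝕐) × (𝕏 × 𝕐) → 𝕌) (hφ : Measurable φ)
    (hlaw : ∀ P ∈ 𝓟,
      Measure.map (fun ω => φ (fun i => Z i.castSucc ω, Z (Fin.last n) ω)) P = Q) :
    ∀ α : ℝ≥0∞, α ≤ 1 →
      (⨆ P ∈ 𝓟, P {ω | (Z (Fin.last n) ω).2 ∉
        {y | α < R {ω' | φ (fun i => Z i.castSucc ω,
          ((Z (Fin.last n) ω).1, y)) ∈ 𝒰 ω'}}}) ≤ α := by
  intro α hα
  apply iSup_le; intro P; apply iSup_le; intro hP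
  set g : Ω → 𝕌 := fun ω => φ (fun i => Z i.castSucc ω, Z (Fin.last n) ω) with hg
  have hgmeas : Measurable g := by
    apply hφ.comp
    exact Measurable.prodMk (measurable_pi_lambda _ (fun i => hZ i.castSucc))
      (hZ (Fin.last n))
  have hf : Measurable (fun u => R {ω' | u ∈ 𝒰 ω'}) :=
    measurable_measure_prodMk_left hgraph
  have hS : MeasurableSet {u | R {ω' | u ∈ 𝒰 ω'} ≤ α} :=
    hf measurableSet_Iic
  have hset : {ω | (Z (Fin.last n) ω).2 ∉
        {y | α < R {ω' | φ (fun i => Z i.castSucc ω,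
          ((Z (Fin.last n) ω).1, y)) ∈ 𝒰 ω'}}}
      = g ⁻¹' {u | R {ω' | u ∈ 𝒰 ω'} ≤ α} := by
    ext ω
    simp [g, not_lt]
  rw [hset, ← Measure.map_apply hgmeas hS, hlaw P hP]
  exact hcal α hα
end

section
/- Let n ∈ ℕ and let P be a probability measure on ℝ^{n+1} (functions Fin(n+1) → ℝ) that is exchangeable, i.e., invariant under the pushforward by every coordinate permutation (ties allowed). Define the conformal transducer π(t) = (1/(n+1)) · #{i ∈ {1,…,n+1} : tᵢ ≥ t_{n+1}}. Then π is stochastically no smaller than uniform: P{t : π(t) ≤ α} ≤ α for every α ∈ [0,1]. -/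
open MeasureTheory
open scoped ENNReal

/-- for an exchangeable probability measure on `ℝ^{n+1}` (ties allowed), the
conformal transducer `π(t) = #{i : tᵢ ≥ t_{n+1}}/(n+1)` is stochastically no smaller than
uniform: `P{π ≤ α} ≤ α` for all `α ∈ [0,1]`. -/
theorem stmt_9 (n : ℕ) (P : Measure (Fin (n + 1) → ℝ)) [IsProbabilityMeasure P]
    (hexch : ∀ σ : Equiv.Perm (Fin (n + 1)), P.map (fun t => t ∘ σ) = P) :
    ∀ α ∈ Set.Icc (0 : ℝ) 1,
      P {t | ((Finset.univ.filter fun i => t (Fin.last n) ≤ t i).card : ℝ) / (n + 1) ≤ α}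
        ≤ ENNReal.ofReal α := by
  intro α hα
  obtain ⟨hα0, _⟩ := hα
  set k : ℕ := ⌊α * (n + 1 : ℝ)⌋₊ with hk
  have hNpos : (0:ℝ) < (n:ℝ) + 1 := by positivity
  -- the sets A j
  set A : Fin (n + 1) → Set (Fin (n + 1) → ℝ) :=
    fun j => {t | (Finset.univ.filter fun i => t j ≤ t i).card ≤ k} with hA
  -- rewrite the goal set
  have hset : {t : Fin (n + 1) → ℝ |
      ((Finset.univ.filter fun i => t (Fin.last n) ≤ t i).card : ℝ) / (n + 1) ≤ α}
      = A (Fin.last n) := by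
    ext t
    simp only [hA, Set.mem_setOf_eq, div_le_iff₀ hNpos, hk]
    rw [Nat.le_floor_iff (by positivity)]
  rw [hset]
  -- measurability
  have hcard : ∀ j, Measurable fun t : Fin (n + 1) → ℝ =>
      (Finset.univ.filter fun i => t j ≤ t i).card := by
    intro j
    have : (fun t : Fin (n + 1) → ℝ => (Finset.univ.filter fun i => t j ≤ t i).card)
        = fun t => ∑ i, if t j ≤ t i then 1 else 0 := by
      funext t; rw [Finset.card_filter]
    rw [this]
    exact Finset.measurable_sum _ fun i _ =>
      Measurable.ite (measurableSet_le (measurable_pi_apply j) (measurable_pi_apply i))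
        measurable_const measurable_const
  have hAmeas : ∀ j, MeasurableSet (A j) := fun j =>
    (hcard j) (MeasurableSet.of_discrete (s := {m : ℕ | m ≤ k}))
  -- exchangeability: all A j have the same measure
  have hsame : ∀ j, P (A j) = P (A (Fin.last n)) := by
    intro j
    have hσm : Measurable fun t : Fin (n + 1) → ℝ => t ∘ (Equiv.swap j (Fin.last n)) :=
      measurable_pi_lambda _ fun i => measurable_pi_apply _
    have := hexch (Equiv.swap j (Fin.last n))
    have hmap : P (A (Fin.last n)) =
        P ((fun t : Fin (n + 1) → ℝ => t ∘ (Equiv.swap j (Fin.last n))) ⁻¹' A (Fin.last n)) := by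
      conv_lhs => rw [← this]
      rw [Measure.map_apply hσm (hAmeas _)]
    have hpre : (fun t : Fin (n + 1) → ℝ => t ∘ (Equiv.swap j (Fin.last n))) ⁻¹' A (Fin.last n)
        = A j := by
      ext t
      simp only [hA, Set.mem_preimage, Set.mem_setOf_eq, Function.comp_apply,
        Equiv.swap_apply_right]
      have hcardeq : (Finset.univ.filter fun i => t j ≤ t (Equiv.swap j (Fin.last n) i)).card
          = (Finset.univ.filter fun i => t j ≤ t i).card := by
        rw [Finset.card_filter, Finset.card_filter]
        exact Equiv.sum_comp (Equiv.swap j (Fin.last n)) (fun i => if t j ≤ t i then 1 else 0)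
      rw [hcardeq]
    rw [hmap, hpre]
  -- pointwise key bound: at most k indices j satisfy t ∈ A j
  have key : ∀ t : Fin (n + 1) → ℝ, (Finset.univ.filter fun j => t ∈ A j).card ≤ k := by
    intro t
    set S := Finset.univ.filter fun j => t ∈ A j with hS
    rcases S.eq_empty_or_nonempty with h | h
    · simp [h]
    · obtain ⟨j0, hj0S, hj0min⟩ := S.exists_min_image t h
      have hsub : S ⊆ Finset.univ.filter fun i => t j0 ≤ t i := by
        intro i hi
        simp only [Finset.mem_filter, Finset.mem_univ, true_and]
        exact hj0min i hi
      have hj0 : (Finset.univ.filter fun i => t j0 ≤ t i).card ≤ k := by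
        have := hj0S
        simp only [hS, Finset.mem_filter, Finset.mem_univ, true_and, hA,
          Set.mem_setOf_eq] at this
        exact this
      exact le_trans (Finset.card_le_card hsub) hj0
  -- sum of measures bound
  have hsum : ∑ j, P (A j) ≤ (k : ℝ≥0∞) := by
    have h1 : ∀ j, P (A j) = ∫⁻ t, (A j).indicator (fun _ => (1:ℝ≥0∞)) t ∂P := by
      intro j
      rw [lintegral_indicator (hAmeas j)]
      simp
    calc ∑ j, P (A j) = ∫⁻ t, ∑ j, (A j).indicator (fun _ => (1:ℝ≥0∞)) t ∂P := by
          simp_rw [h1]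
          rw [lintegral_finset_sum]
          exact fun j _ => (measurable_const.indicator (hAmeas j))
      _ ≤ ∫⁻ _, (k : ℝ≥0∞) ∂P := by
          apply lintegral_mono
          intro t
          have : ∑ j, (A j).indicator (fun _ => (1:ℝ≥0∞)) t
              = ((Finset.univ.filter fun j => t ∈ A j).card : ℝ≥0∞) := by
            rw [Finset.card_filter]
            push_cast
            apply Finset.sum_congr rfl
            intro j _
            simp [Set.indicator_apply]
          show ∑ j, (A j).indicator (fun _ => (1:ℝ≥0∞)) t ≤ (k : ℝ≥0∞)
          rw [this]
          exact_mod_cast Nat.cast_le.mpr (key t)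
      _ = (k : ℝ≥0∞) := by simp
  have hsum' : ((n:ℝ≥0∞) + 1) * P (A (Fin.last n)) ≤ (k : ℝ≥0∞) := by
    calc ((n:ℝ≥0∞) + 1) * P (A (Fin.last n)) = ∑ _j : Fin (n+1), P (A (Fin.last n)) := by
          simp [Finset.sum_const, mul_comm]
      _ = ∑ j, P (A j) := by exact Finset.sum_congr rfl fun j _ => (hsame j).symm
      _ ≤ (k : ℝ≥0∞) := hsum
  -- convert k ≤ α (n+1)
  have hkle : (k : ℝ≥0∞) ≤ ENNReal.ofReal α * ((n:ℝ≥0∞) + 1) := by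
    have h1 : (k : ℝ) ≤ α * (n + 1 : ℝ) := Nat.floor_le (by positivity)
    calc (k : ℝ≥0∞) = ENNReal.ofReal (k : ℝ) := by simp
      _ ≤ ENNReal.ofReal (α * (n + 1 : ℝ)) := ENNReal.ofReal_le_ofReal h1
      _ = ENNReal.ofReal α * ENNReal.ofReal (n + 1 : ℝ) := ENNReal.ofReal_mul hα0
      _ = ENNReal.ofReal α * ((n:ℝ≥0∞) + 1) := by
          congr 1
          rw [ENNReal.ofReal_add (by positivity) zero_le_one]
          simp
  have hfinal : ((n:ℝ≥0∞) + 1) * P (A (Fin.last n)) ≤ ((n:ℝ≥0∞) + 1) * ENNReal.ofReal α :=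
    le_trans hsum' (by rw [mul_comm] at hkle; exact hkle)
  have hN0 : ((n:ℝ≥0∞) + 1) ≠ 0 := by simp
  have hNtop : ((n:ℝ≥0∞) + 1) ≠ ⊤ := by simp [ENNReal.add_ne_top]
  exact (ENNReal.mul_le_mul_iff_right hN0 hNtop).mp hfinal
end

section
/- Let n ∈ ℕ and let t₁,…,t_{n+1} be pairwise distinct real numbers, with ascending rank r = #{i ∈ {1,…,n+1} : tᵢ ≤ t_{n+1}} of the last value. Then #{i ∈ {1,…,n+1} : tᵢ ≥ t_{n+1}} = n + 2 − r; consequently, if U′ is uniformly distributed on {1,…,n+1}, then P(U′ ≥ r) = (1/(n+1)) · #{i : tᵢ ≥ t_{n+1}}, i.e., the IM plausibility contour R{𝒰 ∋ r(T_{n+1})} for the nested random set 𝒰 = {1,…,U′} equals the conformal transducer (1/(n+1)) Σᵢ 1{Tᵢ ≥ T_{n+1}}. -/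
open MeasureTheory
open scoped ENNReal

/-- for pairwise distinct scores `t₁,…,t_{n+1}` with ascending rank
`r = #{i : tᵢ ≤ t_{n+1}}` of the last one, `#{i : tᵢ ≥ t_{n+1}} = n + 2 − r`; and for
`U' ∼ Unif{1,…,n+1}`, `P(U' ≥ r) = #{i : tᵢ ≥ t_{n+1}}/(n+1)`, i.e., the IM plausibility
contour equals the conformal transducer. -/
theorem stmt_10 (n : ℕ) (t : Fin (n + 1) → ℝ) (hinj : Function.Injective t)
    {Ω : Type*} [MeasurableSpace Ω] (P : Measure Ω) [IsProbabilityMeasure P]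
    (U' : Ω → ℕ) (hU' : Measurable U')
    (hrange : ∀ ω, U' ω ∈ Finset.Icc 1 (n + 1))
    (hunif : ∀ k ∈ Finset.Icc 1 (n + 1), P {ω | U' ω = k} = (n + 1 : ℝ≥0∞)⁻¹) :
    (Finset.univ.filter fun i => t (Fin.last n) ≤ t i).card
      = n + 2 - (Finset.univ.filter fun i => t i ≤ t (Fin.last n)).card ∧
    P {ω | (Finset.univ.filter fun i => t i ≤ t (Fin.last n)).card ≤ U' ω}
      = ((Finset.univ.filter fun i => t (Fin.last n) ≤ t i).card : ℝ≥0∞) / (n + 1) := by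
  set r := (Finset.univ.filter fun i => t i ≤ t (Fin.last n)).card with hrdef
  -- r = card(<) + 1
  have hle : (Finset.univ.filter fun i => t i ≤ t (Fin.last n))
      = insert (Fin.last n) (Finset.univ.filter fun i => t i < t (Fin.last n)) := by
    ext i
    simp only [Finset.mem_filter, Finset.mem_univ, true_and, Finset.mem_insert]
    constructor
    · intro h
      rcases lt_or_eq_of_le h with h' | h'
      · exact Or.inr h'
      · exact Or.inl (hinj h')
    · rintro (rfl | h)
      · exact le_refl _
      · exact le_of_lt h
  have hnotmem : Fin.last n ∉ (Finset.univ.filter fun i => t i < t (Fin.last n)) := by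
    simp
  have hrlt : r = (Finset.univ.filter fun i => t i < t (Fin.last n)).card + 1 := by
    rw [hrdef, hle, Finset.card_insert_of_notMem hnotmem]
  have hltcard : (Finset.univ.filter fun i => t i < t (Fin.last n)).card ≤ n + 1 := by
    exact le_trans (Finset.card_filter_le _ _) (by simp)
  have hr1 : 1 ≤ r := by omega
  have hrn : r ≤ n + 1 := by
    calc r ≤ Finset.univ.card := Finset.card_filter_le _ _
    _ = n + 1 := by simp
  -- card of ≥ set
  have hge : (Finset.univ.filter fun i => t (Fin.last n) ≤ t i)
      = Finset.univ.filter fun i => ¬ t i < t (Fin.last n) := by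
    ext i; simp [not_lt]
  have hgecard : (Finset.univ.filter fun i => t (Fin.last n) ≤ t i).card = n + 2 - r := by
    rw [hge, Finset.filter_not, Finset.card_sdiff_of_subset (Finset.filter_subset _ _)]
    simp only [Finset.card_univ, Fintype.card_fin]
    omega
  refine ⟨hgecard, ?_⟩
  -- event decomposition
  have hset : {ω | r ≤ U' ω} = ⋃ k ∈ Finset.Icc r (n + 1), {ω | U' ω = k} := by
    ext ω
    simp only [Set.mem_setOf_eq, Set.mem_iUnion, Finset.mem_Icc, exists_prop]
    constructor
    · intro h
      exact ⟨U' ω, ⟨h, (Finset.mem_Icc.mp (hrange ω)).2⟩, rfl⟩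
    · rintro ⟨k, ⟨hk1, _⟩, hk⟩
      omega
  have hmeas : ∀ k : ℕ, MeasurableSet {ω | U' ω = k} := fun k =>
    hU' (measurableSet_singleton k)
  have hdisj : (↑(Finset.Icc r (n + 1)) : Set ℕ).PairwiseDisjoint
      (fun k => {ω | U' ω = k}) := by
    intro a _ b _ hab
    apply Set.disjoint_left.mpr
    intro ω ha hb
    exact hab (ha.symm.trans hb)
  rw [hset, measure_biUnion_finset hdisj (fun k _ => hmeas k)]
  have hsum : ∑ k ∈ Finset.Icc r (n + 1), P {ω | U' ω = k}
      = ∑ k ∈ Finset.Icc r (n + 1), (n + 1 : ℝ≥0∞)⁻¹ := by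
    apply Finset.sum_congr rfl
    intro k hk
    apply hunif
    rw [Finset.mem_Icc] at hk ⊢
    omega
  rw [hsum, Finset.sum_const, Nat.card_Icc, hgecard]
  have : n + 1 + 1 - r = n + 2 - r := by omega
  rw [this, nsmul_eq_mul, div_eq_mul_inv]
end

section
/- Let 𝕐 be a nonempty set and π : 𝕐 → [0,1] a function attaining its supremum M = sup_{y} π(y) at some point ŷ ∈ 𝕐, with M > 0. Define the conditioning-adjusted contour π̇(y) = π(y)/M and the stretching-adjusted contour π̈(y) = 1 if y = ŷ and π̈(y) = π(y) otherwise. Then: (a) both adjusted contours attain the value 1 (sup_y π̇(y) = sup_y π̈(y) = 1); (b) π̈(y) ≤ π̇(y) for every y ∈ 𝕐; and (c) consequently for every α ∈ [0,1], the level sets satisfy {y : π̈(y) > α} ⊆ {y : π̇(y) > α}, so prediction sets derived from the stretching adjustment are never larger than those from the conditioning adjustment. -/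
/-- for a `[0,1]`-valued contour `π` attaining its positive maximum at `yhat`,
the conditioning adjustment `π̇ = π / π(yhat)` and the stretching adjustment
`π̈ = 1 at yhat, π elsewhere` both attain the value 1, `π̈ ≤ π̇` pointwise, and the
stretching level sets are contained in the conditioning level sets. -/
theorem stmt_12 {𝕐 : Type*} [Nonempty 𝕐] [DecidableEq 𝕐]
    (π : 𝕐 → ℝ) (hπ01 : ∀ y, π y ∈ Set.Icc (0 : ℝ) 1)
    (yhat : 𝕐) (hmax : ∀ y, π y ≤ π yhat) (hpos : 0 < π yhat) :
    ((⨆ y, π y / π yhat) = 1 ∧ (⨆ y, if y = yhat then (1 : ℝ) else π y) = 1) ∧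
    (∀ y, (if y = yhat then (1 : ℝ) else π y) ≤ π y / π yhat) ∧
    (∀ α ∈ Set.Icc (0 : ℝ) 1,
      {y | α < if y = yhat then (1 : ℝ) else π y} ⊆ {y | α < π y / π yhat}) := by
  have hle : ∀ y, (if y = yhat then (1 : ℝ) else π y) ≤ π y / π yhat := by
    intro y
    by_cases h : y = yhat
    · simp [h, div_self hpos.ne']
    · simp only [h, if_false]
      have h0 := (hπ01 y).1
      have h1 := (hπ01 yhat).2
      calc π y = π y * 1 / 1 := by ring
        _ ≤ π y / π yhat := by
            rw [mul_one]
            exact div_le_div_of_nonneg_left h0 hpos h1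
  refine ⟨⟨?_, ?_⟩, hle, ?_⟩
  · apply le_antisymm
    · exact ciSup_le fun y => div_le_one_of_le₀ (hmax y) hpos.le
    · have := le_ciSup (f := fun y => π y / π yhat)
        ⟨1, fun x ⟨y, hy⟩ => hy ▸ div_le_one_of_le₀ (hmax y) hpos.le⟩ yhat
      rwa [div_self hpos.ne'] at this
  · apply le_antisymm
    · exact ciSup_le fun y => by
        by_cases h : y = yhat <;> simp [h, (hπ01 y).2]
    · have := le_ciSup (f := fun y => if y = yhat then (1 : ℝ) else π y)
        ⟨1, fun x ⟨y, hy⟩ => by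
          subst hy; by_cases h : y = yhat <;> simp [h, (hπ01 y).2]⟩ yhat
      simpa using this
  · intro α _ y hy
    exact lt_of_lt_of_le hy (hle y)
end

section
/- Let (Ω′, R) be a probability space, U′ : Ω′ → ℕ a random variable, 𝕐 a set, and g : 𝕐 → ℕ a function; define the contour π(y) = R{ω′ : g(y) ≤ U′(ω′)}. Then for every nonempty subset A ⊆ 𝕐, R{ω′ : ∃ y ∈ A, g(y) ≤ U′(ω′)} = sup_{y∈A} π(y), and the supremum is attained at any y ∈ A minimizing g over A. (Hence the upper probability Π̄(A) = R{𝕐(𝒰) ∩ A ≠ ∅} of the IM with nested random set 𝒰 = {1,…,U′} is the possibility measure determined by its contour: Π̄(A) = sup_{y∈A} π(y).) -/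
open MeasureTheory
open scoped ENNReal

/-- consonance of the IM output: with nested random set `𝒰 = {1,…,U'}` and
contour `π(y) = R{g(y) ≤ U'}`, the upper probability of a nonempty assertion `A` is the
possibility measure `sup_{y ∈ A} π(y)`, and the supremum is attained at any minimizer of
`g` over `A`. -/
theorem stmt_13 {Ω' 𝕐 : Type*} [MeasurableSpace Ω']
    (R : Measure Ω') [IsProbabilityMeasure R]
    (U' : Ω' → ℕ) (g : 𝕐 → ℕ) (A : Set 𝕐) (hA : A.Nonempty) :
    R {ω' | ∃ y ∈ A, g y ≤ U' ω'} = (⨆ y ∈ A, R {ω' | g y ≤ U' ω'}) ∧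
    ∀ y₀ ∈ A, (∀ y ∈ A, g y₀ ≤ g y) →
      R {ω' | g y₀ ≤ U' ω'} = ⨆ y ∈ A, R {ω' | g y ≤ U' ω'} := by
  have hmin : ∀ y₀ ∈ A, (∀ y ∈ A, g y₀ ≤ g y) →
      R {ω' | g y₀ ≤ U' ω'} = ⨆ y ∈ A, R {ω' | g y ≤ U' ω'} := by
    intro y₀ hy₀ hminy
    apply le_antisymm
    · exact le_biSup (fun y => R {ω' | g y ≤ U' ω'}) hy₀
    · apply iSup₂_le
      intro y hy
      exact measure_mono fun ω hω => le_trans (hminy y hy) hω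
  refine ⟨?_, hmin⟩
  -- find a minimizer
  have himg : (g '' A).Nonempty := hA.image g
  obtain ⟨y₀, hy₀, hgy₀⟩ := Nat.sInf_mem himg
  have hminy : ∀ y ∈ A, g y₀ ≤ g y := by
    intro y hy
    rw [hgy₀]
    exact Nat.sInf_le ⟨y, hy, rfl⟩
  have hset : {ω' | ∃ y ∈ A, g y ≤ U' ω'} = {ω' | g y₀ ≤ U' ω'} := by
    ext ω'
    constructor
    · rintro ⟨y, hy, hle⟩
      exact le_trans (hminy y hy) hle
    · intro h
      exact ⟨y₀, hy₀, h⟩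
  rw [hset]
  exact hmin y₀ hy₀ hminy
end

section
/- Let 𝕐 be a set, π : 𝕐 → [0,1] a function, and define the consonant upper probability Π̄(A) = sup_{y∈A} π(y) for A ⊆ 𝕐 (with the convention that the supremum over the empty set is 0), and the conjugate lower probability Π(A) = 1 − Π̄(𝕐 \ A). Then for every α ∈ [0,1], the intersection of all subsets with lower probability at least 1−α equals the strict level set of the contour: ⋂ {A ⊆ 𝕐 : Π(A) ≥ 1 − α} = {y ∈ 𝕐 : π(y) > α}. -/
/-- for a consonant predictor with `[0,1]`-valued contour `π`, upper
probability `Π̄(A) = sup_{y ∈ A} π(y)` (with `sup ∅ = 0`, which is the real-number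
convention for `sSup ∅`), and conjugate lower probability `Π(A) = 1 − Π̄(Aᶜ)`, the
intersection of all assertions with lower probability at least `1 − α` is the strict
level set `{y : π(y) > α}`. -/
theorem stmt_14 {𝕐 : Type*} (π : 𝕐 → ℝ) (hπ01 : ∀ y, π y ∈ Set.Icc (0 : ℝ) 1) :
    ∀ α ∈ Set.Icc (0 : ℝ) 1,
      ⋂₀ {A : Set 𝕐 | 1 - α ≤ 1 - sSup (π '' Aᶜ)} = {y | α < π y} := by
  intro α hα
  have key : ∀ A : Set 𝕐, (1 - α ≤ 1 - sSup (π '' Aᶜ)) ↔ sSup (π '' Aᶜ) ≤ α := by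
    intro A; constructor <;> intro h <;> linarith
  ext y
  simp only [Set.mem_sInter, Set.mem_setOf_eq]
  constructor
  · intro h
    have := h {z | α < π z} ?_
    · exact this
    rw [key]
    rcases Set.eq_empty_or_nonempty ({z | α < π z}ᶜ : Set 𝕐) with he | hne
    · rw [he, Set.image_empty, Real.sSup_empty]; exact hα.1
    · apply csSup_le (hne.image π)
      rintro x ⟨z, hz, rfl⟩
      simpa using hz
  · intro hy A hA
    rw [key] at hA
    by_contra hyA
    have : π y ≤ sSup (π '' Aᶜ) := by
      apply le_csSup
      · exact ⟨1, by rintro x ⟨z, _, rfl⟩; exact (hπ01 z).2⟩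
      · exact ⟨y, hyA, rfl⟩
    linarith
end

section
/- Let Ω be a measurable space, 𝒫 a nonempty family of probability measures on Ω, 𝕐 a measurable space, Y : Ω → 𝕐 measurable, A ⊆ 𝕐 measurable, and let W : Ω → [0,1] and V : Ω → [0,1] be measurable (the data-dependent upper and lower prediction probabilities of A). Suppose validity holds at A: sup_{P∈𝒫} P({W ≤ α} ∩ {Y ∈ A}) ≤ α and sup_{P∈𝒫} P({V ≥ 1−α} ∩ {Y ∉ A}) ≤ α for every α ∈ [0,1]. Then one-sided contraction cannot occur: sup_{ω∈Ω} W(ω) ≥ sup_{P∈𝒫} P{Y ∈ A} and inf_{ω∈Ω} V(ω) ≤ inf_{P∈𝒫} P{Y ∈ A}. In particular, a valid probabilistic predictor avoids sure loss. -/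
open MeasureTheory

/-- contrapositive of Proposition 1 / no sure loss: if the upper and lower
prediction probabilities `W`, `V` of an assertion `A` are valid, then one-sided
contraction cannot occur: `sup_ω W(ω) ≥ sup_{P} P{Y ∈ A}` and
`inf_ω V(ω) ≤ inf_{P} P{Y ∈ A}`. -/
theorem stmt_15 {Ω 𝕐 : Type*} [MeasurableSpace Ω] [MeasurableSpace 𝕐]
    (𝓟 : Set (Measure Ω)) (h𝓟 : 𝓟.Nonempty) (hprob : ∀ P ∈ 𝓟, IsProbabilityMeasure P)
    (Y : Ω → 𝕐) (hY : Measurable Y) (A : Set 𝕐) (hA : MeasurableSet A)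
    (W V : Ω → ℝ) (hW : Measurable W) (hV : Measurable V)
    (hW01 : ∀ ω, W ω ∈ Set.Icc (0 : ℝ) 1) (hV01 : ∀ ω, V ω ∈ Set.Icc (0 : ℝ) 1)
    (hvalidW : ∀ α ∈ Set.Icc (0 : ℝ) 1,
      (⨆ P ∈ 𝓟, P ({ω | W ω ≤ α} ∩ {ω | Y ω ∈ A})) ≤ ENNReal.ofReal α)
    (hvalidV : ∀ α ∈ Set.Icc (0 : ℝ) 1,
      (⨆ P ∈ 𝓟, P ({ω | 1 - α ≤ V ω} ∩ {ω | Y ω ∉ A})) ≤ ENNReal.ofReal α) :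
    (⨆ P ∈ 𝓟, P {ω | Y ω ∈ A}) ≤ ENNReal.ofReal (⨆ ω, W ω) ∧
    ENNReal.ofReal (⨅ ω, V ω) ≤ ⨅ P ∈ 𝓟, P {ω | Y ω ∈ A} := by
  obtain ⟨P0, hP0⟩ := h𝓟
  haveI hΩ : Nonempty Ω := by
    by_contra h
    rw [not_nonempty_iff] at h
    have h1 := (hprob P0 hP0).measure_univ
    rw [Set.univ_eq_empty_iff.mpr h, measure_empty] at h1
    exact zero_ne_one h1
  have hWbdd : BddAbove (Set.range W) := ⟨1, by rintro _ ⟨ω, rfl⟩; exact (hW01 ω).2⟩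
  have hVbdd : BddBelow (Set.range V) := ⟨0, by rintro _ ⟨ω, rfl⟩; exact (hV01 ω).1⟩
  set s := ⨆ ω, W ω with hs
  set t := ⨅ ω, V ω with ht
  have hs1 : s ≤ 1 := ciSup_le fun ω => (hW01 ω).2
  have hs0 : (0 : ℝ) ≤ s :=
    le_trans (hW01 (Classical.arbitrary Ω)).1 (le_ciSup hWbdd _)
  have ht0 : (0 : ℝ) ≤ t := le_ciInf fun ω => (hV01 ω).1
  have ht1 : t ≤ 1 := le_trans (ciInf_le hVbdd (Classical.arbitrary Ω)) (hV01 _).2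
  constructor
  · have hset : {ω | W ω ≤ s} ∩ {ω | Y ω ∈ A} = {ω | Y ω ∈ A} := by
      ext ω
      simp only [Set.mem_inter_iff, Set.mem_setOf_eq, and_iff_right_iff_imp]
      exact fun _ => le_ciSup hWbdd ω
    have := hvalidW s ⟨hs0, hs1⟩
    rwa [hset] at this
  · have hset : {ω | 1 - (1 - t) ≤ V ω} ∩ {ω | Y ω ∉ A} = {ω | Y ω ∉ A} := by
      ext ω
      simp only [Set.mem_inter_iff, Set.mem_setOf_eq, and_iff_right_iff_imp]
      intro _
      have : t ≤ V ω := ciInf_le hVbdd ω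
      linarith
    have hval := hvalidV (1 - t) ⟨by linarith, by linarith⟩
    rw [hset] at hval
    refine le_iInf fun P => le_iInf fun hP => ?_
    haveI := hprob P hP
    have hcompl : P {ω | Y ω ∉ A} ≤ ENNReal.ofReal (1 - t) :=
      le_trans (le_iSup₂ (f := fun P (_ : P ∈ 𝓟) => P {ω | Y ω ∉ A}) P hP) hval
    have hmeas : MeasurableSet {ω | Y ω ∈ A} := hY hA
    have hc : {ω | Y ω ∉ A} = {ω | Y ω ∈ A}ᶜ := rfl
    rw [hc, prob_compl_eq_one_sub hmeas] at hcompl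
    have hsum : ENNReal.ofReal t + ENNReal.ofReal (1 - t) = 1 := by
      rw [← ENNReal.ofReal_add ht0 (by linarith)]
      norm_num
    have hle1 : P {ω | Y ω ∈ A} ≤ 1 := prob_le_one
    have h1 : (1 : ENNReal) ≤ ENNReal.ofReal (1 - t) + P {ω | Y ω ∈ A} := by
      rw [tsub_le_iff_right] at hcompl
      exact hcompl
    calc ENNReal.ofReal t = 1 - ENNReal.ofReal (1 - t) := by
          rw [← hsum, ENNReal.add_sub_cancel_right ENNReal.ofReal_ne_top]
      _ ≤ P {ω | Y ω ∈ A} := tsub_le_iff_left.mpr h1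
end

section
/- Let 𝒵 be a measurable space, n ∈ ℕ, and P an exchangeable probability measure on 𝒵^{n+1} (invariant under the pushforward by every coordinate permutation of Fin(n+1)). Let Ψ : 𝒵ⁿ × 𝒵 → ℝ be measurable and symmetric in its first argument: Ψ(v ∘ σ, z) = Ψ(v, z) for every v : Fin n → 𝒵, every z ∈ 𝒵, and every permutation σ of Fin n. For z ∈ 𝒵^{n+1} define Tᵢ(z) = Ψ(z_{−i}, zᵢ), i ∈ {1,…,n+1}, where z_{−i} : Fin n → 𝒵 lists the coordinates of z other than the i-th in increasing index order. Then the law of T = (T₁,…,T_{n+1}) under P is itself exchangeable: for every permutation τ of Fin(n+1), the pushforward of P under z ↦ (T_{τ(1)}(z),…,T_{τ(n+1)}(z)) equals the pushforward of P under z ↦ (T₁(z),…,T_{n+1}(z)). -/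
open MeasureTheory

/-- if `P` is exchangeable on `𝒵^{n+1}` and `Ψ` is symmetric in its first
(vector) argument, then the law of the nonconformity scores
`Tᵢ(z) = Ψ(z_{−i}, zᵢ)` is exchangeable. -/
theorem stmt_16 {𝒵 : Type*} [MeasurableSpace 𝒵] (n : ℕ)
    (P : Measure (Fin (n + 1) → 𝒵)) [IsProbabilityMeasure P]
    (hexch : ∀ σ : Equiv.Perm (Fin (n + 1)), P.map (fun z => z ∘ σ) = P)
    (Ψ : (Fin n → 𝒵) × 𝒵 → ℝ) (hΨ : Measurable Ψ)
    (hsym : ∀ (v : Fin n → 𝒵) (z : 𝒵) (σ : Equiv.Perm (Fin n)), Ψ (v ∘ σ, z) = Ψ (v, z)) :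
    ∀ τ : Equiv.Perm (Fin (n + 1)),
      P.map (fun z => fun i => Ψ (fun j => z ((τ i).succAbove j), z (τ i)))
        = P.map (fun z => fun i => Ψ (fun j => z (i.succAbove j), z i)) := by
  intro τ
  set T : (Fin (n + 1) → 𝒵) → Fin (n + 1) → ℝ :=
    fun z => fun i => Ψ (fun j => z (i.succAbove j), z i) with hT
  have hTmeas : Measurable T :=
    measurable_pi_lambda _ fun i =>
      hΨ.comp ((measurable_pi_lambda _ fun j => measurable_pi_apply _).prodMk
        (measurable_pi_apply _))
  have hperm : Measurable (fun z : Fin (n + 1) → 𝒵 => z ∘ τ) :=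
    measurable_pi_lambda _ fun j => measurable_pi_apply _
  have key : (fun z : Fin (n + 1) → 𝒵 =>
      fun i => Ψ (fun j => z ((τ i).succAbove j), z (τ i))) = T ∘ (fun z => z ∘ τ) := by
    funext z i
    let e : Option (Fin n) ≃ Option (Fin n) :=
      ((finSuccEquiv' i).symm.trans (τ : Fin (n+1) ≃ Fin (n+1))).trans (finSuccEquiv' (τ i))
    have he : ∀ j : Fin n, ∃ k, e (some j) = some k := by
      intro j
      have hne : τ (i.succAbove j) ≠ τ i := fun h =>
        Fin.succAbove_ne i j (τ.injective h)
      have : e (some j) = finSuccEquiv' (τ i) (τ (i.succAbove j)) := by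
        simp [e, finSuccEquiv'_symm_some]
      rw [this]
      rcases Option.eq_none_or_eq_some (finSuccEquiv' (τ i) (τ (i.succAbove j))) with h | h
      · exfalso
        apply hne
        have := congrArg (finSuccEquiv' (τ i)).symm h
        simpa [finSuccEquiv'_symm_none] using this
      · exact h
    let σ : Equiv.Perm (Fin n) := e.removeNone
    have hσ : ∀ j : Fin n, (τ i).succAbove (σ j) = τ (i.succAbove j) := by
      intro j
      have h1 : some (σ j) = e (some j) := Equiv.removeNone_some e (he j)
      have h2 : e (some j) = finSuccEquiv' (τ i) (τ (i.succAbove j)) := by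
        simp [e, finSuccEquiv'_symm_some]
      have := congrArg (finSuccEquiv' (τ i)).symm (h1.trans h2)
      simpa [finSuccEquiv'_symm_some] using this
    have := hsym (fun j => z ((τ i).succAbove j)) (z (τ i)) σ
    simp only [hT, Function.comp_apply]
    rw [show (fun j => z (τ (i.succAbove j))) = (fun j => z ((τ i).succAbove j)) ∘ ⇑σ from
      funext fun j => by simp [hσ j]]
    exact (this).symm
  rw [key, ← Measure.map_map hTmeas hperm, hexch τ]
end

section
/- Let Ω be a measurable space, 𝒫 a nonempty family of probability measures on Ω, 𝕐 a measurable space, Y : Ω → 𝕐 measurable, and for each ω let Π̄_ω : Set 𝕐 → ℝ be a monotone set function (A ⊆ B implies Π̄_ω(A) ≤ Π̄_ω(B)) with contour π(ω,y) = Π̄_ω({y}); assume ω ↦ π(ω, Y(ω)) and, for each measurable A, ω ↦ Π̄_ω(A) are measurable. If the predictor is uniformly valid, i.e., sup_{P∈𝒫} P{ω : π(ω, Y(ω)) ≤ α} ≤ α for every α ∈ [0,1], then it is valid: for every measurable A ⊆ 𝕐 and every α ∈ [0,1], sup_{P∈𝒫} P({ω : Π̄_ω(A) ≤ α} ∩ {ω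 : Y(ω) ∈ A}) ≤ α. -/
open MeasureTheory

/-- Section 3.3: uniform validity implies validity. If the data-dependent
monotone upper probabilities `Π̄_ω` have contour `π(ω,y) = Π̄_ω {y}` satisfying
`sup_P P{π(ω, Y(ω)) ≤ α} ≤ α`, then for every measurable `A` and `α ∈ [0,1]`,
`sup_P P({Π̄_ω(A) ≤ α} ∩ {Y ∈ A}) ≤ α`. -/
theorem stmt_17 {Ω 𝕐 : Type*} [MeasurableSpace Ω] [MeasurableSpace 𝕐]
    (𝓟 : Set (Measure Ω)) (h𝓟 : 𝓟.Nonempty) (hprob : ∀ P ∈ 𝓟, IsProbabilityMeasure P)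
    (Y : Ω → 𝕐) (hY : Measurable Y)
    (Pbar : Ω → Set 𝕐 → ℝ)
    (hmono : ∀ ω, ∀ A B : Set 𝕐, A ⊆ B → Pbar ω A ≤ Pbar ω B)
    (hmeasπ : Measurable fun ω => Pbar ω {Y ω})
    (hmeasA : ∀ A : Set 𝕐, MeasurableSet A → Measurable fun ω => Pbar ω A)
    (huvalid : ∀ α ∈ Set.Icc (0 : ℝ) 1,
      (⨆ P ∈ 𝓟, P {ω | Pbar ω {Y ω} ≤ α}) ≤ ENNReal.ofReal α) :
    ∀ A : Set 𝕐, MeasurableSet A → ∀ α ∈ Set.Icc (0 : ℝ) 1,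
      (⨆ P ∈ 𝓟, P ({ω | Pbar ω A ≤ α} ∩ {ω | Y ω ∈ A})) ≤ ENNReal.ofReal α := by
  intro A hA α hα
  refine le_trans ?_ (huvalid α hα)
  refine iSup₂_le fun P hP => ?_
  refine le_trans (measure_mono ?_) (le_iSup₂ (f := fun P _ => P {ω | Pbar ω {Y ω} ≤ α}) P hP)
  rintro ω ⟨h1, h2⟩
  exact le_trans (hmono ω _ A (Set.singleton_subset_iff.mpr h2)) h1
end
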